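/- arXiv:2312.01736 — 3 statements merged into one kernel-verified Lean document; each statement's English description precedes it below -/
import Mathlib

section
/- Let Θ be a bounded operator on H ⊕ H with Θ*SΘ = S (S = diag(1,-1)), and suppose Θ(φ_t, Jφ_t) = (φ_0, Jφ_0) for unit vectors φ_0, φ_t ∈ H = L²(ℝ³). Let L be the operator such that Θ(f, Jf) = (Lf, JLf) for all f (i.e., Θ commutes with the swap-conjugation J-structure). Then Im ⟨φ_0, L A φ_t⟩ = Im ⟨φ_t, A φ_t⟩ for every bounded operator A on H commuting appropriately, where LAφ_t denotes the first component of Θ(Aφ_t, JAφ_t). In particular, if A is self-adjoint then Im ⟨φ_0, L A φ_t⟩ = 0. -/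
open scoped ComplexInnerProductSpace
open ContinuousLinearMap

/-!
On vectors of the form `(f, J f)` the operator `Θ` acts as `f ↦ (L f, J (L f))` with
`L = U + J V`. Since `J` is antiunitary, `⟪x, y⟫ - ⟪J x, J y⟫ = 2 i Im ⟪x, y⟫`, so the
`S`-form of two such vectors is `2 i` times the imaginary part of their first inner product.
Hence `Θ* S Θ = S` says exactly that `L` preserves `Im ⟪·, ·⟫`; apply this to `φ_t`
(where `L φ_t = φ_0`) and `A φ_t`.
-/

lemma involutive_add_swap {E : Type*} [AddCommMagma E] (J : E → E)
    (hJadd : ∀ f g, J (f + g) = J f + J g) (hJinv : ∀ f, J (J f) = f) (U V : E → E) (f : E) :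
    J (U f + J (V f)) = V f + J (U f) := by
  rw [hJadd, hJinv, add_comm]

section Antiunitary

variable {H : Type*} [NormedAddCommGroup H] [InnerProductSpace ℂ H] (J : H → H)

lemma inner_sub_inner_antiunitary (hJinner : ∀ f g, ⟪J f, J g⟫ = ⟪g, f⟫) (f g : H) :
    ⟪f, g⟫ - ⟪J f, J g⟫ = (2 * (⟪f, g⟫ : ℂ).im : ℝ) * Complex.I := by
  rw [hJinner, ← inner_conj_symm g f, Complex.sub_conj]

theorem im_inner_add_antiunitary_comp (hJadd : ∀ f g, J (f + g) = J f + J g)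
    (hJinv : ∀ f, J (J f) = f) (hJinner : ∀ f g, ⟪J f, J g⟫ = ⟪g, f⟫) (U V : H → H)
    (hS : ∀ x y : H × H,
      ⟪U x.1 + J (V (J x.2)), U y.1 + J (V (J y.2))⟫
        - ⟪V x.1 + J (U (J x.2)), V y.1 + J (U (J y.2))⟫
      = ⟪x.1, y.1⟫ - ⟪x.2, y.2⟫)
    (f g : H) :
    (⟪U f + J (V f), U g + J (V g)⟫ : ℂ).im = (⟪f, g⟫ : ℂ).im := by
  have hSfg := hS (f, J f) (g, J g)
  simp only [hJinv] at hSfg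
  rw [← involutive_add_swap J hJadd hJinv U V f,
    ← involutive_add_swap J hJadd hJinv U V g,
    inner_sub_inner_antiunitary J hJinner, inner_sub_inner_antiunitary J hJinner] at hSfg
  have h2im := mul_right_cancel₀ Complex.I_ne_zero hSfg
  exact_mod_cast (mul_right_inj' two_ne_zero).mp (Complex.ofReal_injective h2im)

end Antiunitary

theorem stmt_4_general {H : Type*} [NormedAddCommGroup H] [InnerProductSpace ℂ H] [CompleteSpace H]
    (J : H → H)
    (hJadd : ∀ f g, J (f + g) = J f + J g)
    (hJinv : ∀ f, J (J f) = f)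
    (hJinner : ∀ f g, ⟪J f, J g⟫ = ⟪g, f⟫)
    (U V : H →L[ℂ] H)
    (hS : ∀ x y : H × H,
      ⟪U x.1 + J (V (J x.2)), U y.1 + J (V (J y.2))⟫
        - ⟪V x.1 + J (U (J x.2)), V y.1 + J (U (J y.2))⟫
      = ⟪x.1, y.1⟫ - ⟪x.2, y.2⟫)
    (φ₀ φt : H)
    (hcond1 : U φt + J (V (J (J φt))) = φ₀) :
    ∀ A : H →L[ℂ] H,
      ((⟪φ₀, U (A φt) + J (V (A φt))⟫ : ℂ).im = (⟪φt, A φt⟫ : ℂ).im) ∧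
      (IsSelfAdjoint A → (⟪φ₀, U (A φt) + J (V (A φt))⟫ : ℂ).im = 0) := by
  intro A
  rw [hJinv] at hcond1
  have him : (⟪φ₀, U (A φt) + J (V (A φt))⟫ : ℂ).im = (⟪φt, A φt⟫ : ℂ).im :=
    hcond1 ▸ im_inner_add_antiunitary_comp J hJadd hJinv hJinner U V hS φt (A φt)
  exact ⟨him, fun hA => him.trans (hA.isSymmetric.im_inner_self_apply φt)⟩

/-- Let `Θ = [[U, JVJ],[V, JUJ]]` on `H ⊕ H` satisfy `Θ*SΘ = S`
(expressed via the sesquilinear form with `S = diag(1,-1)`), and suppose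
`Θ(φ_t, Jφ_t) = (φ_0, Jφ_0)` for unit vectors `φ_0, φ_t`.  With `L = U + JV`
(so that `L(Aφ_t)` is the first component of `Θ(Aφ_t, JAφ_t)`), one has
`Im ⟨φ_0, L A φ_t⟩ = Im ⟨φ_t, A φ_t⟩` for every bounded operator `A`; in
particular `Im ⟨φ_0, L A φ_t⟩ = 0` whenever `A` is self-adjoint. -/
theorem stmt_4 {H : Type*} [NormedAddCommGroup H] [InnerProductSpace ℂ H] [CompleteSpace H]
    (J : H → H)
    (hJadd : ∀ f g, J (f + g) = J f + J g)
    (hJsmul : ∀ (c : ℂ) (f : H), J (c • f) = (starRingEnd ℂ c) • J f)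
    (hJinv : ∀ f, J (J f) = f)
    (hJinner : ∀ f g, ⟪J f, J g⟫ = ⟪g, f⟫)
    (U V : H →L[ℂ] H)
    (hS : ∀ x y : H × H,
      ⟪U x.1 + J (V (J x.2)), U y.1 + J (V (J y.2))⟫
        - ⟪V x.1 + J (U (J x.2)), V y.1 + J (U (J y.2))⟫
      = ⟪x.1, y.1⟫ - ⟪x.2, y.2⟫)
    (φ₀ φt : H) (hφ₀ : ‖φ₀‖ = 1) (hφt : ‖φt‖ = 1)
    (hcond1 : U φt + J (V (J (J φt))) = φ₀)
    (hcond2 : V φt + J (U (J (J φt))) = J φ₀) :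
    ∀ A : H →L[ℂ] H,
      ((⟪φ₀, U (A φt) + J (V (A φt))⟫ : ℂ).im = (⟪φt, A φt⟫ : ℂ).im) ∧
      (IsSelfAdjoint A → (⟪φ₀, U (A φt) + J (V (A φt))⟫ : ℂ).im = 0) :=
  stmt_4_general J hJadd hJinv hJinner U V hS φ₀ φt hcond1
end

section
/- On the bosonic Fock space, for any f ∈ L²(ℝ³) with a(f), a*(f) the standard annihilation/creation operators and N the number operator, the operators b(f) = √((n−N)/n)·a(f) and b*(f) = a*(f)·√((n−N)/n) (defined on the truncated Fock space with N ≤ n) satisfy [b(f), b(g)] = 0, [b*(f), b*(g)] = 0, and [b(f), b*(g)] = ⟨f,g⟩(1 − N/n) − (1/n) a*(g) a(f). -/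
/-!
Everything follows from the two shift relations `a(f) sq = sq' a(f)` and `sq a*(g) = a*(g) sq'`,
which let `sq` be moved across `a` and `a*` at the price of replacing it by `sq'`. For
`[b(f), b(g)]` both products become `sq sq' a(f) a(g)` up to the order of `a(f), a(g)`. For
`[b(f), b*(g)]` the CCR turn `b(f) b*(g)` into `a*(g) sq'² a(f) + ⟨f,g⟩ sq²`, while
`b*(g) b(f) = a*(g) sq² a(f)`; since `sq'² = sq² − 1/n`, the difference is
`⟨f,g⟩ sq² − (1/n) a*(g) a(f)`.
-/

open scoped ComplexInnerProductSpace

section Shift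

variable {M : Type*} [Semigroup M] {x y s t : M}

theorem commute_mul_left_of_shift (hxy : Commute x y) (hx : x * s = t * x) (hy : y * s = t * y) :
    Commute (s * x) (s * y) :=
  calc s * x * (s * y) = s * (x * s) * y := by simp only [mul_assoc]
    _ = s * t * (x * y) := by rw [hx]; simp only [mul_assoc]
    _ = s * t * (y * x) := by rw [hxy.eq]
    _ = s * (y * s) * x := by rw [hy]; simp only [mul_assoc]
    _ = s * y * (s * x) := by simp only [mul_assoc]

theorem commute_mul_right_of_shift (hxy : Commute x y) (hx : s * x = x * t) (hy : s * y = y * t) :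
    Commute (x * s) (y * s) :=
  calc x * s * (y * s) = x * (s * y) * s := by simp only [mul_assoc]
    _ = x * y * (t * s) := by rw [hy]; simp only [mul_assoc]
    _ = y * x * (t * s) := by rw [hxy.eq]
    _ = y * (s * x) * s := by rw [hx]; simp only [mul_assoc]
    _ = y * s * (x * s) := by simp only [mul_assoc]

end Shift

theorem commutator_mul_of_shift {𝕜 R : Type*} [CommSemiring 𝕜] [Ring R] [Algebra 𝕜 R]
    {x y s t : R} {c d : 𝕜} (hxy : x * y - y * x = c • 1) (hx : x * s = t * x)
    (hy : s * y = y * t) (ht : t * t = s * s - d • 1) :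
    s * x * (y * s) - y * s * (s * x) = c • (s * s) - d • (y * x) := by
  calc s * x * (y * s) - y * s * (s * x)
      = s * (x * y) * s - y * s * (s * x) := by simp only [mul_assoc]
    _ = c • (s * s) + (s * y) * (x * s) - y * (s * s) * x := by
        rw [sub_eq_iff_eq_add.mp hxy]
        simp only [mul_add, add_mul, mul_smul_comm, smul_mul_assoc, mul_one, mul_assoc]
    _ = c • (s * s) + y * (t * t) * x - y * (s * s) * x := by
        rw [hx, hy]; simp only [mul_assoc]
    _ = c • (s * s) - d • (y * x) := by
        rw [ht]; simp only [mul_sub, sub_mul, mul_smul_comm, smul_mul_assoc, mul_one]; abel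

theorem stmt_6_general {Hsp F : Type*}
    [NormedAddCommGroup Hsp] [InnerProductSpace ℂ Hsp]
    [AddCommGroup F] [Module ℂ F]
    (n : ℕ)
    (a ad : Hsp → Module.End ℂ F)  -- annihilation and creation operators
    (N : Module.End ℂ F)            -- number operator
    (sq sq' : Module.End ℂ F)       -- √((n−N)/n) and its shift √((n−N−1)/n)
    (hccr : ∀ f g, a f * ad g - ad g * a f = (⟪f, g⟫ : ℂ) • (1 : Module.End ℂ F))
    (haa : ∀ f g, a f * a g = a g * a f)
    (hadad : ∀ f g, ad f * ad g = ad g * ad f)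
    (hsq : sq * sq = 1 - ((n : ℂ))⁻¹ • N)
    (hsq' : sq' * sq' = 1 - ((n : ℂ))⁻¹ • N - ((n : ℂ))⁻¹ • (1 : Module.End ℂ F))
    (hmove_a : ∀ f, a f * sq = sq' * a f)
    (hmove_ad : ∀ g, sq * ad g = ad g * sq') :
    (∀ f g, (sq * a f) * (sq * a g) = (sq * a g) * (sq * a f)) ∧
    (∀ f g, (ad f * sq) * (ad g * sq) = (ad g * sq) * (ad f * sq)) ∧
    (∀ f g, (sq * a f) * (ad g * sq) - (ad g * sq) * (sq * a f)
      = (⟪f, g⟫ : ℂ) • (1 - ((n : ℂ))⁻¹ • N) - ((n : ℂ))⁻¹ • (ad g * a f)) := by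
  have hshift : sq' * sq' = sq * sq - ((n : ℂ))⁻¹ • 1 := by rw [hsq', hsq]
  refine ⟨fun f g ↦ (commute_mul_left_of_shift (haa f g) (hmove_a f) (hmove_a g)).eq,
    fun f g ↦ (commute_mul_right_of_shift (hadad f g) (hmove_ad f) (hmove_ad g)).eq,
    fun f g ↦ ?_⟩
  rw [commutator_mul_of_shift (hccr f g) (hmove_a f) (hmove_ad g) hshift, hsq]

/-- For the operators `b(f) = √((n−N)/n)·a(f)` and
`b*(f) = a*(f)·√((n−N)/n)` on the truncated bosonic Fock space, the standard CCR
for `a, a*` and the functional-calculus relations for `sq = √((n−N)/n)` (with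
`sq² = 1 − N/n` and shift relations `a(f) sq = sq₊ a(f)`, `sq a*(g) = a*(g) sq₊`
where `sq₊² = 1 − (N+1)/n`) imply `[b(f), b(g)] = 0`, `[b*(f), b*(g)] = 0` and
`[b(f), b*(g)] = ⟨f,g⟩(1 − N/n) − (1/n) a*(g) a(f)`. -/
theorem stmt_6 {Hsp F : Type*}
    [NormedAddCommGroup Hsp] [InnerProductSpace ℂ Hsp]
    [AddCommGroup F] [Module ℂ F]
    (n : ℕ) (hn : 0 < n)
    (a ad : Hsp → Module.End ℂ F)  -- annihilation and creation operators
    (N : Module.End ℂ F)            -- number operator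
    (sq sq' : Module.End ℂ F)       -- √((n−N)/n) and its shift √((n−N−1)/n)
    (hccr : ∀ f g, a f * ad g - ad g * a f = (⟪f, g⟫ : ℂ) • (1 : Module.End ℂ F))
    (haa : ∀ f g, a f * a g = a g * a f)
    (hadad : ∀ f g, ad f * ad g = ad g * ad f)
    (hsq : sq * sq = 1 - ((n : ℂ))⁻¹ • N)
    (hsq' : sq' * sq' = 1 - ((n : ℂ))⁻¹ • N - ((n : ℂ))⁻¹ • (1 : Module.End ℂ F))
    (hmove_a : ∀ f, a f * sq = sq' * a f)
    (hmove_ad : ∀ g, sq * ad g = ad g * sq') :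
    (∀ f g, (sq * a f) * (sq * a g) = (sq * a g) * (sq * a f)) ∧
    (∀ f g, (ad f * sq) * (ad g * sq) = (ad g * sq) * (ad f * sq)) ∧
    (∀ f g, (sq * a f) * (ad g * sq) - (ad g * sq) * (sq * a f)
      = (⟪f, g⟫ : ℂ) • (1 - ((n : ℂ))⁻¹ • N) - ((n : ℂ))⁻¹ • (ad g * a f)) :=
  stmt_6_general n a ad N sq sq' hccr haa hadad hsq hsq' hmove_a hmove_ad
end

section
/- Let Θ(t;0) solve i∂_tΘ(t;0) = −Θ(t;0)T(t) with Θ(0;0) = Id, where T(t) = [[h_t + K̃₁, −K̃₂],[conj(K̃₂), −h_t − K̃₁]] with K̃₂ projected so that K̃₂(Jφ_t) = 0 and (h_t + K̃₁) acting on φ_t as i∂_tφ_t modulo the projection. Then Θ(t;0)(φ_t, Jφ_t) = (φ_0, Jφ_0) for all t, i.e., the Bogoliubov flow transports the condensate pair backwards to the initial condensate pair. -/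
open ContinuousLinearMap

/-!
Differentiate `t ↦ Θ(t;0)(φ_t, Jφ_t)`. The block identities say that `T(t)` maps the condensate
pair to `i` times its time derivative, so the two contributions
`i Θ(t;0) T(t)(φ_t, Jφ_t) = i² Θ(t;0)(∂_tφ_t, J∂_tφ_t)` and `Θ(t;0)(∂_tφ_t, J∂_tφ_t)` cancel.
-/

section Transport

variable {E F : Type*} [NormedAddCommGroup E] [NormedSpace ℂ E]
  [NormedAddCommGroup F] [NormedSpace ℂ F]

theorem HasDerivAt.complexCLM_apply {Θ : ℝ → E →L[ℂ] F} {Θ' : E →L[ℂ] F}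
    {u : ℝ → E} {u' : E} {t : ℝ} (hΘ : HasDerivAt Θ Θ' t) (hu : HasDerivAt u u' t) :
    HasDerivAt (fun s => Θ s (u s)) (Θ' (u t) + Θ t u') t :=
  ((restrictScalarsIsometry ℂ E F ℝ ℝ).toContinuousLinearMap.hasFDerivAt.comp_hasDerivAt t
    hΘ).clm_apply hu

theorem hasDerivAt_apply_eq_zero_of_generator {Θ : ℝ → E →L[ℂ] F} {T : ℝ → E →L[ℂ] E}
    {u u' : ℝ → E} {t : ℝ} (hΘ : HasDerivAt Θ (Complex.I • (Θ t ∘L T t)) t)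
    (hu : HasDerivAt u (u' t) t) (hT : T t (u t) = Complex.I • u' t) :
    HasDerivAt (fun s => Θ s (u s)) 0 t := by
  have hcancel : (Complex.I • (Θ t ∘L T t)) (u t) + Θ t (u' t) = 0 := by
    rw [smul_apply, comp_apply, hT, map_smul, smul_smul, Complex.I_mul_I, neg_one_smul,
      neg_add_cancel]
  simpa only [hcancel] using hΘ.complexCLM_apply hu

theorem apply_eq_apply_zero_of_generator {Θ : ℝ → E →L[ℂ] F} {T : ℝ → E →L[ℂ] E}
    {u u' : ℝ → E} (hΘ : ∀ t, HasDerivAt Θ (Complex.I • (Θ t ∘L T t)) t)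
    (hu : ∀ t, HasDerivAt u (u' t) t) (hT : ∀ t, T t (u t) = Complex.I • u' t) (t : ℝ) :
    Θ t (u t) = Θ 0 (u 0) :=
  have hderiv := fun s => hasDerivAt_apply_eq_zero_of_generator (hΘ s) (hu s) (hT s)
  is_const_of_deriv_eq_zero (fun s => (hderiv s).differentiableAt) (fun s => (hderiv s).deriv) t 0

end Transport

theorem stmt_17_general {H : Type*} [NormedAddCommGroup H] [InnerProductSpace ℂ H]
    (Jc : H → H)  -- complex conjugation
    (hJadd : ∀ x y, Jc (x + y) = Jc x + Jc y)
    (hJcont : Continuous Jc)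
    (φ φd : ℝ → H)
    (hφ : ∀ t, HasDerivAt φ (φd t) t)
    (A B C D : ℝ → H →L[ℂ] H)  -- the blocks of the generator T(t)
    (hA : ∀ t, A t (φ t) = Complex.I • φd t)
    (hB : ∀ t, B t (Jc (φ t)) = 0)
    (hC : ∀ t, C t (φ t) = 0)
    (hD : ∀ t, D t (Jc (φ t)) = Complex.I • Jc (φd t))
    (Θ : ℝ → (H × H) →L[ℂ] (H × H))
    (hODE : ∀ t, @HasDerivAt ℝ _ _ _ _ _
      (NormedSpace.toIsBoundedSMul (𝕜 := ℝ) (E := (H × H) →L[ℂ] (H × H))).continuousSMul Θ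
      (Complex.I • (Θ t ∘L
        ((A t ∘L ContinuousLinearMap.fst ℂ H H + B t ∘L ContinuousLinearMap.snd ℂ H H).prod
          (C t ∘L ContinuousLinearMap.fst ℂ H H + D t ∘L ContinuousLinearMap.snd ℂ H H)))) t)
    (hinit : Θ 0 = 1) :
    ∀ t : ℝ, Θ t (φ t, Jc (φ t)) = (φ 0, Jc (φ 0)) := by
  -- a continuous additive map is real-linear, so `J` commutes with `∂_t`
  let J : H →L[ℝ] H := (AddMonoidHom.mk' Jc hJadd).toRealLinearMap hJcont
  have hpair : ∀ t, HasDerivAt (fun s => (φ s, Jc (φ s))) (φd t, Jc (φd t)) t := fun t =>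
    (hφ t).prodMk (J.hasFDerivAt.comp_hasDerivAt t (hφ t))
  have hgen : ∀ t, ((A t ∘L fst ℂ H H + B t ∘L snd ℂ H H).prod
      (C t ∘L fst ℂ H H + D t ∘L snd ℂ H H)) (φ t, Jc (φ t)) =
      Complex.I • (φd t, Jc (φd t)) := fun t => by
    simp [hA, hB, hC, hD]
  intro t
  simpa [hinit] using apply_eq_apply_zero_of_generator hODE hpair hgen t

/-- Transport of the condensate pair by the Bogoliubov flow.
Let `Θ(t;0)` solve `i∂_t Θ(t;0) = −Θ(t;0) T(t)`, `Θ(0;0) = Id`, where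
`T(t) = [[A t, B t],[C t, D t]]` is the block generator (with intended blocks
`A = h + K̃₁`, `B = −K̃₂`, `C = conj K̃₂`, `D = −(conj h + conj K̃₁)`) satisfying the
projection identities `B t (Jφ_t) = 0`, `C t φ_t = 0`, `A t φ_t = i∂_t φ_t` and
`D t (Jφ_t) = i·J(∂_t φ_t)` along the Hartree solution `φ_t`.
Then `Θ(t;0)(φ_t, Jφ_t) = (φ_0, Jφ_0)` for all `t`. -/
theorem stmt_17 {H : Type*} [NormedAddCommGroup H] [InnerProductSpace ℂ H]
    (Jc : H → H)  -- complex conjugation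
    (hJadd : ∀ x y, Jc (x + y) = Jc x + Jc y)
    (hJsmul : ∀ (c : ℂ) (x : H), Jc (c • x) = (starRingEnd ℂ c) • Jc x)
    (hJcont : Continuous Jc)
    (φ φd : ℝ → H)
    (hφ : ∀ t, HasDerivAt φ (φd t) t)
    (A B C D : ℝ → H →L[ℂ] H)  -- the blocks of the generator T(t)
    (hA : ∀ t, A t (φ t) = Complex.I • φd t)
    (hB : ∀ t, B t (Jc (φ t)) = 0)
    (hC : ∀ t, C t (φ t) = 0)
    (hD : ∀ t, D t (Jc (φ t)) = Complex.I • Jc (φd t))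
    (Θ : ℝ → (H × H) →L[ℂ] (H × H))
    (hODE : ∀ t, @HasDerivAt ℝ _ _ _ _ _
      (NormedSpace.toIsBoundedSMul (𝕜 := ℝ) (E := (H × H) →L[ℂ] (H × H))).continuousSMul Θ
      (Complex.I • (Θ t ∘L
        ((A t ∘L ContinuousLinearMap.fst ℂ H H + B t ∘L ContinuousLinearMap.snd ℂ H H).prod
          (C t ∘L ContinuousLinearMap.fst ℂ H H + D t ∘L ContinuousLinearMap.snd ℂ H H)))) t)
    (hinit : Θ 0 = 1) :
    ∀ t : ℝ, Θ t (φ t, Jc (φ t)) = (φ 0, Jc (φ 0)) :=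
  stmt_17_general Jc hJadd hJcont φ φd hφ A B C D hA hB hC hD Θ hODE hinit
end
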